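/- Every positive ray through the origin in the space H(D) of Hölder distributions intersects the image L(T(D)) of the universal Teichmüller space under the Liouville map in at most one point. -/

import Mathlib

open Complex MeasureTheory

/-- The angle metric on the unit circle. -/
noncomputable def dCircle (x y : ℂ) : ℝ := |Complex.arg (x * (starRingEnd ℂ) y)|

/-- A quasisymmetric homeomorphism of the unit circle: a homeomorphism of `S¹` distorting
symmetric pairs of adjacent arcs by a bounded factor (in the angle metric). -/
def QS (h : ℂ → ℂ) : Prop :=
  Set.BijOn h (Metric.sphere 0 1) (Metric.sphere 0 1) ∧
  ContinuousOn h (Metric.sphere 0 1) ∧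
  ∃ M : ℝ, 1 ≤ M ∧ ∀ θ t : ℝ, 0 < t → t ≤ Real.pi / 2 →
    dCircle (h (Complex.exp ((θ + t) * Complex.I))) (h (Complex.exp (θ * Complex.I))) ≤
      M * dCircle (h (Complex.exp (θ * Complex.I))) (h (Complex.exp ((θ - t) * Complex.I)))

/-- The Liouville measure on the space of geodesics of the unit disk, realized as the
measure on pairs of circle points with density `dα dβ / |e^{iα} - e^{iβ}|²`. -/
noncomputable def LiouvilleM : Measure (ℂ × ℂ) :=
  Measure.map (fun p : ℝ × ℝ => (Complex.exp (p.1 * Complex.I), Complex.exp (p.2 * Complex.I)))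
    ((volume.restrict (Set.Ico 0 (2 * Real.pi) ×ˢ Set.Ico 0 (2 * Real.pi))).withDensity
      (fun p : ℝ × ℝ => ENNReal.ofReal
        (1 / (‖Complex.exp (p.1 * Complex.I) - Complex.exp (p.2 * Complex.I)‖)^2)))

/-!
A normalized quasisymmetric map `h` fixes `1, i, -1`; lifting it through the argument shows that
it maps the arcs `[1, i]`, `[i, -1]` onto themselves and `[-1, ψ]`, `[ψ, 1]` onto `[-1, -i]`,
`[-i, 1]`, where `ψ = h⁻¹(-i)`. So `h_*L` gives the boxes `X = [1, i] × [-1, -i]` and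
`Y = [i, -1] × [-i, 1]` the Liouville masses `A, B` of the boxes of the quadruple `(1, i, -1, ψ)`.
These are logarithms of cross-ratios, and Ptolemy's identity gives `e^{-A} + e^{-B} = 1`.
If `h_*L = tΨ` then `A = t Ψ(X)` and `B = t Ψ(Y)`, and `t ↦ e^{-t Ψ(X)} + e^{-t Ψ(Y)}` is
strictly decreasing, so `t` is determined by `Ψ`.
-/

noncomputable section

namespace LiouvilleMap

open Set Metric
open scoped Real

def cis (θ : ℝ) : ℂ := Complex.exp (θ * Complex.I)

lemma cis_add (x y : ℝ) : cis (x + y) = cis x * cis y := by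
  simp only [cis, Complex.ofReal_add, add_mul, Complex.exp_add]

lemma norm_cis (θ : ℝ) : ‖cis θ‖ = 1 := Complex.norm_exp_ofReal_mul_I θ

lemma cis_mem_sphere (θ : ℝ) : cis θ ∈ sphere (0 : ℂ) 1 := by
  simp [norm_cis]

@[fun_prop]
lemma continuous_cis : Continuous cis := by unfold cis; fun_prop

@[fun_prop]
lemma measurable_cis : Measurable cis := continuous_cis.measurable

lemma cis_zero : cis 0 = 1 := by simp [cis]

lemma cis_pi : cis π = -1 := by simp [cis, Complex.exp_pi_mul_I]

lemma cis_neg_pi : cis (-π) = -1 := by simp [cis, Complex.exp_neg, Complex.exp_pi_mul_I]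

lemma cis_two_pi : cis (2 * π) = 1 := by simp [cis, Complex.exp_two_pi_mul_I]

lemma cis_pi_div_two : cis (π / 2) = Complex.I := by
  simp [cis, Complex.exp_pi_div_two_mul_I]

lemma cis_three_pi_div_two : cis (3 * π / 2) = -Complex.I := by
  rw [show 3 * π / 2 = π + π / 2 by ring, cis_add, cis_pi, cis_pi_div_two, neg_one_mul]

lemma cis_eq_cis_iff {x y : ℝ} : cis x = cis y ↔ ∃ n : ℤ, x = y + n * (2 * π) := by
  simp only [cis, Complex.exp_eq_exp_iff_exists_int]
  refine exists_congr fun n => ⟨fun h => ?_, fun h => by rw [h]; push_cast; ring⟩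
  have := congrArg Complex.im h
  simp only [Complex.mul_im, Complex.add_im, Complex.ofReal_re, Complex.ofReal_im, Complex.I_re,
    Complex.I_im, Complex.intCast_re, Complex.intCast_im, Complex.mul_re, Complex.re_ofNat,
    Complex.im_ofNat] at this
  linarith

/-- The argument of `z` taken in `(c, c + 2π]`. -/
def argFrom (c : ℝ) (z : ℂ) : ℝ := c + π + Complex.arg (-(z * cis (-c)))

lemma neg_cis_mul_cis_neg (θ c : ℝ) : -(cis θ * cis (-c)) = cis (θ - c - π) := by
  rw [show θ - c - π = θ + -c + -π by ring, cis_add, cis_add, cis_neg_pi]; ring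

lemma argFrom_cis {c θ : ℝ} (h : θ ∈ Ioo c (c + 2 * π)) : argFrom c (cis θ) = θ := by
  rw [argFrom, neg_cis_mul_cis_neg, cis, Complex.arg_exp_mul_I,
    (toIocMod_eq_self _).2 ⟨by linarith [h.1], by linarith [h.2]⟩]
  ring

lemma norm_neg_mul_cis {z : ℂ} (hz : z ∈ sphere (0 : ℂ) 1) (c : ℝ) :
    ‖-(z * cis (-c))‖ = 1 := by
  simp_all [norm_cis]

lemma cis_argFrom (c : ℝ) {z : ℂ} (hz : z ∈ sphere (0 : ℂ) 1) : cis (argFrom c z) = z := by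
  have harg : cis (Complex.arg (-(z * cis (-c)))) = -(z * cis (-c)) := by
    have := Complex.norm_mul_exp_arg_mul_I (-(z * cis (-c)))
    rwa [norm_neg_mul_cis hz c, Complex.ofReal_one, one_mul] at this
  have hc : cis c * cis (-c) = 1 := by rw [← cis_add, add_neg_cancel, cis_zero]
  rw [argFrom, cis_add, harg, cis_add, cis_pi]
  linear_combination z * hc

lemma continuousOn_argFrom (c : ℝ) : ContinuousOn (argFrom c) (sphere 0 1 \ {cis c}) := by
  rintro z ⟨hz, hzc⟩
  have hslit : -(z * cis (-c)) ∈ Complex.slitPlane := by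
    refine Complex.mem_slitPlane_iff_arg.2 ⟨fun hπ => hzc ?_, ?_⟩
    · rw [← cis_argFrom c hz, argFrom, hπ, add_assoc, ← two_mul, cis_add, cis_two_pi, mul_one]
      rfl
    · exact norm_ne_zero_iff.1 (by simp [norm_neg_mul_cis hz c])
  exact (continuousAt_const.add ((Complex.continuousAt_arg hslit).comp
    (f := fun w => -(w * cis (-c))) (by fun_prop))).continuousWithinAt

lemma argFrom_cis_self (c : ℝ) : argFrom c (cis c) = c + 2 * π := by
  rw [argFrom, ← cis_add, add_neg_cancel, cis_zero, Complex.arg_neg_one]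
  ring

def arc (a b : ℝ) : Set ℂ := cis '' Icc a b

lemma arc_subset_sphere (a b : ℝ) : arc a b ⊆ sphere (0 : ℂ) 1 := by
  rintro _ ⟨t, -, rfl⟩
  exact cis_mem_sphere t

lemma lintegral_ofReal_deriv_eq_sub {f f' : ℝ → ℝ} {a b : ℝ} (hab : a ≤ b)
    (hderiv : ∀ x ∈ Icc a b, HasDerivAt f (f' x) x) (hnonneg : ∀ x ∈ Icc a b, 0 ≤ f' x) :
    ∫⁻ x in Icc a b, ENNReal.ofReal (f' x) = ENNReal.ofReal (f b - f a) := by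
  have hcont : ContinuousOn f (Icc a b) := fun x hx =>
    (hderiv x hx).continuousAt.continuousWithinAt
  have hderiv' : ∀ x ∈ Ioo a b, HasDerivAt f (f' x) x := fun x hx =>
    hderiv x (Ioo_subset_Icc_self hx)
  have hint : IntegrableOn f' (Ioc a b) := intervalIntegral.integrableOn_deriv_of_nonneg hcont
    hderiv' fun x hx => hnonneg x (Ioo_subset_Icc_self hx)
  rw [setLIntegral_congr Ioc_ae_eq_Icc.symm, ← ofReal_integral_eq_lintegral_ofReal hint
    ((ae_restrict_iff' measurableSet_Ioc).2 (.of_forall fun x hx =>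
      hnonneg x (Ioc_subset_Icc_self hx))),
    ← intervalIntegral.integral_of_le hab,
    intervalIntegral.integral_eq_sub_of_hasDerivAt_of_le hab hcont hderiv'
      ((intervalIntegrable_iff_integrableOn_Ioc_of_le hab).2 hint)]

lemma hasDerivAt_cot {x : ℝ} (hx : Real.sin x ≠ 0) :
    HasDerivAt Real.cot (-1 / Real.sin x ^ 2) x := by
  have hcot : Real.cot = fun x => Real.cos x / Real.sin x := funext Real.cot_eq_cos_div_sin
  rw [hcot]
  refine ((Real.hasDerivAt_cos x).div (Real.hasDerivAt_sin x) hx).congr_deriv ?_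
  rw [← Real.sin_sq_add_cos_sq x]
  ring

lemma sin_half_sub_pos {u v : ℝ} (huv : u < v) (hvu : v < u + 2 * π) :
    0 < Real.sin ((v - u) / 2) :=
  Real.sin_pos_of_pos_of_lt_pi (by linarith) (by linarith)

lemma cot_le_cot {u v : ℝ} (hu : 0 < u) (huv : u ≤ v) (hv : v < π) :
    Real.cot v ≤ Real.cot u := by
  have hsu : 0 < Real.sin u := Real.sin_pos_of_pos_of_lt_pi hu (huv.trans_lt hv)
  have hsv : 0 < Real.sin v := Real.sin_pos_of_pos_of_lt_pi (hu.trans_le huv) hv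
  have hsin : 0 ≤ Real.sin (v - u) :=
    Real.sin_nonneg_of_nonneg_of_le_pi (by linarith) (by linarith)
  rw [Real.cot_eq_cos_div_sin, Real.cot_eq_cos_div_sin, div_le_div_iff₀ hsv hsu]
  rw [Real.sin_sub] at hsin
  linarith

lemma norm_cis_sub_cis_sq (x y : ℝ) :
    ‖cis x - cis y‖ ^ 2 = 4 * Real.sin ((y - x) / 2) ^ 2 := by
  have : cis x - cis y = -(cis x * (Complex.exp (Complex.I * ↑(y - x)) - 1)) := by
    rw [mul_comm Complex.I, ← cis, mul_sub, ← cis_add]; ring_nf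
  rw [this, norm_neg, norm_mul, norm_cis, one_mul, Complex.norm_exp_I_mul_ofReal_sub_one,
    Real.norm_eq_abs, sq_abs]
  ring

lemma lintegral_inv_norm_cis_sub_cis_sq {x c d : ℝ} (hxc : x < c) (hcd : c ≤ d)
    (hdx : d < x + 2 * π) :
    ∫⁻ y in Icc c d, ENNReal.ofReal (1 / ‖cis x - cis y‖ ^ 2) =
      ENNReal.ofReal ((Real.cot ((c - x) / 2) - Real.cot ((d - x) / 2)) / 2) := by
  have hderiv : ∀ y ∈ Icc c d,
      HasDerivAt (fun y => -Real.cot ((y - x) / 2) / 2) (1 / ‖cis x - cis y‖ ^ 2) y := by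
    intro y hy
    have hsin := (sin_half_sub_pos (hxc.trans_le hy.1) (hy.2.trans_lt hdx)).ne'
    refine (((hasDerivAt_cot hsin).comp y
      (((hasDerivAt_id y).sub_const x).div_const 2)).neg.div_const 2).congr_deriv ?_
    rw [norm_cis_sub_cis_sq]
    field_simp
    ring
  rw [lintegral_ofReal_deriv_eq_sub hcd hderiv fun _ _ => by positivity]
  ring_nf

/-- The logarithm of the cross-ratio of `cis a, cis b, cis c, cis d`. -/
def liouvilleMass (a b c d : ℝ) : ℝ :=
  Real.log (Real.sin ((d - b) / 2)) - Real.log (Real.sin ((c - b) / 2)) -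
    (Real.log (Real.sin ((d - a) / 2)) - Real.log (Real.sin ((c - a) / 2)))

lemma setLIntegral_Icc_prod_Icc_inv_norm_cis_sub_cis_sq {a b c d : ℝ} (hab : a ≤ b)
    (hbc : b < c) (hcd : c ≤ d) (hda : d < a + 2 * π) :
    ∫⁻ p in Icc a b ×ˢ Icc c d, ENNReal.ofReal (1 / ‖cis p.1 - cis p.2‖ ^ 2) =
      ENNReal.ofReal (liouvilleMass a b c d) := by
  have hsin {u x : ℝ} (hx : x ∈ Icc a b) (hu : c ≤ u) (hu' : u ≤ d) :
      0 < Real.sin ((u - x) / 2) :=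
    sin_half_sub_pos (by linarith [hx.2]) (by linarith [hx.1])
  have hderiv : ∀ x ∈ Icc a b, HasDerivAt
      (fun x => Real.log (Real.sin ((d - x) / 2)) - Real.log (Real.sin ((c - x) / 2)))
      ((Real.cot ((c - x) / 2) - Real.cot ((d - x) / 2)) / 2) x := by
    intro x hx
    have hlog (u : ℝ) (hu : 0 < Real.sin ((u - x) / 2)) :
        HasDerivAt (fun x => Real.log (Real.sin ((u - x) / 2)))
          (-Real.cot ((u - x) / 2) / 2) x := by
      refine (((Real.hasDerivAt_sin _).comp x
        (((hasDerivAt_id x).const_sub u).div_const 2)).log hu.ne').congr_deriv ?_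
      simp only [Function.comp_apply, id, Real.cot_eq_cos_div_sin]
      ring
    refine ((hlog d (hsin hx hcd le_rfl)).sub (hlog c (hsin hx le_rfl hcd))).congr_deriv ?_
    ring
  have hnonneg : ∀ x ∈ Icc a b, 0 ≤ (Real.cot ((c - x) / 2) - Real.cot ((d - x) / 2)) / 2 :=
    fun x hx => by
      have := cot_le_cot (u := (c - x) / 2) (v := (d - x) / 2) (by linarith [hx.2])
        (by linarith) (by linarith [hx.1])
      linarith
  rw [Measure.volume_eq_prod, setLIntegral_prod _ (by fun_prop),
    setLIntegral_congr_fun measurableSet_Icc fun x hx =>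
      lintegral_inv_norm_cis_sub_cis_sq (by linarith [hx.2]) hcd (by linarith [hx.1]),
    lintegral_ofReal_deriv_eq_sub hab hderiv hnonneg]
  rfl

lemma cis_preimage_arc_inter_Ico_ae_eq {a b : ℝ} (ha : 0 ≤ a) (hb : b ≤ 2 * π) :
    (cis ⁻¹' arc a b ∩ Ico 0 (2 * π) : Set ℝ) =ᵐ[volume] Icc a b := by
  have hπ := Real.pi_pos
  have hnull : volume ({0, 2 * π} : Set ℝ) = 0 := (toFinite _).measure_zero _
  rw [ae_eq_set]
  constructor <;> refine measure_mono_null ?_ hnull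
  · rintro x ⟨⟨⟨t, ht, hxt⟩, hx⟩, hnot⟩
    obtain ⟨n, hn⟩ := cis_eq_cis_iff.1 hxt
    have hn₁ : (n : ℝ) < 2 := by nlinarith [ht.2, hx.1]
    have hn₀ : (-1 : ℝ) < n := by nlinarith [ht.1, hx.2]
    obtain rfl | rfl : n = 0 ∨ n = 1 := by
      have : n < 2 := by exact_mod_cast hn₁
      have : -1 < n := by exact_mod_cast hn₀
      omega
    · simp only [Int.cast_zero, zero_mul, add_zero] at hn
      exact absurd (hn ▸ ht) hnot
    · left
      push_cast at hn
      linarith [hx.1, ht.2]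
  · rintro x ⟨hx, hnot⟩
    have : ¬ x < 2 * π := fun hlt => hnot ⟨mem_image_of_mem cis hx, ha.trans hx.1, hlt⟩
    right
    exact le_antisymm (hx.2.trans hb) (not_lt.1 this)

lemma measurableSet_arc (a b : ℝ) : MeasurableSet (arc a b) :=
  (isCompact_Icc.image continuous_cis).isClosed.measurableSet

lemma liouvilleM_eq_map : LiouvilleM = Measure.map (Prod.map cis cis)
    ((volume.restrict (Ico 0 (2 * π) ×ˢ Ico 0 (2 * π))).withDensity
      fun p => ENNReal.ofReal (1 / ‖cis p.1 - cis p.2‖ ^ 2)) := rfl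

lemma liouvilleM_arc_prod_arc {a b c d : ℝ} (ha : 0 ≤ a) (hab : a ≤ b) (hbc : b < c)
    (hcd : c ≤ d) (hd : d ≤ 2 * π) (hda : d < a + 2 * π) :
    LiouvilleM (arc a b ×ˢ arc c d) = ENNReal.ofReal (liouvilleMass a b c d) := by
  have hbox := (measurableSet_arc a b).prod (measurableSet_arc c d)
  have hpre := (measurable_cis.prodMap measurable_cis) hbox
  rw [liouvilleM_eq_map, Measure.map_apply (by fun_prop) hbox, withDensity_apply _ hpre,
    Measure.restrict_restrict hpre, preimage_prod_map_prod, prod_inter_prod, Measure.volume_eq_prod,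
    setLIntegral_congr (Measure.set_prod_ae_eq
      (cis_preimage_arc_inter_Ico_ae_eq ha (by linarith)) (cis_preimage_arc_inter_Ico_ae_eq
        (by linarith) hd)),
    ← Measure.volume_eq_prod, setLIntegral_Icc_prod_Icc_inv_norm_cis_sub_cis_sq hab hbc hcd hda]

lemma sin_sub_mul_sin_sub_add_sin_sub_mul_sin_sub (α β γ δ : ℝ) :
    Real.sin (γ - β) * Real.sin (δ - α) + Real.sin (δ - γ) * Real.sin (β - α) =
      Real.sin (δ - β) * Real.sin (γ - α) := by
  simp only [Real.sin_sub]
  ring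

lemma exp_neg_liouvilleMass {a b c d : ℝ} (hab : a < b) (hbc : b < c) (hcd : c < d)
    (hda : d < a + 2 * π) :
    Real.exp (-liouvilleMass a b c d) = Real.sin ((c - b) / 2) * Real.sin ((d - a) / 2) /
      (Real.sin ((d - b) / 2) * Real.sin ((c - a) / 2)) := by
  have hexp {u v : ℝ} (huv : u < v) (hvu : v < u + 2 * π) :
      Real.exp (Real.log (Real.sin ((v - u) / 2))) = Real.sin ((v - u) / 2) :=
    Real.exp_log (sin_half_sub_pos huv hvu)
  rw [liouvilleMass, show ∀ p q r s : ℝ, -(p - q - (r - s)) = q + r - (p + s) by intros; ring,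
    Real.exp_sub, Real.exp_add, Real.exp_add, hexp hbc (by linarith),
    hexp (hab.trans (hbc.trans hcd)) hda, hexp (hbc.trans hcd) (by linarith),
    hexp (hab.trans hbc) (by linarith)]

/-- The normalization for the quadruple `a, b, c, d`; the arc `[d, a]` through `1` is
written `[d, a + 2π]`. -/
lemma exp_neg_liouvilleMass_add_exp_neg_liouvilleMass {a b c d : ℝ} (hab : a < b) (hbc : b < c)
    (hcd : c < d) (hda : d < a + 2 * π) :
    Real.exp (-liouvilleMass a b c d) + Real.exp (-liouvilleMass b c d (a + 2 * π)) = 1 := by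
  have hshift (u : ℝ) : Real.sin ((a + 2 * π - u) / 2) = Real.sin ((u - a) / 2) := by
    rw [show (a + 2 * π - u) / 2 = π - (u - a) / 2 by ring, Real.sin_pi_sub]
  rw [exp_neg_liouvilleMass hab hbc hcd hda, exp_neg_liouvilleMass hbc hcd (by linarith)
    (by linarith), hshift, hshift, mul_comm (Real.sin ((c - a) / 2)), ← add_div,
    div_eq_one_iff_eq (mul_pos (sin_half_sub_pos (hbc.trans hcd) (by linarith))
      (sin_half_sub_pos (hab.trans hbc) (by linarith))).ne']
  have := sin_sub_mul_sin_sub_add_sin_sub_mul_sin_sub (a / 2) (b / 2) (c / 2) (d / 2)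
  simp only [← sub_div] at this
  linear_combination this

lemma liouvilleMass_pos {a b c d : ℝ} (hab : a < b) (hbc : b < c) (hcd : c < d)
    (hda : d < a + 2 * π) : 0 < liouvilleMass a b c d := by
  have := exp_neg_liouvilleMass_add_exp_neg_liouvilleMass hab hbc hcd hda
  have : Real.exp (-liouvilleMass a b c d) < 1 := by
    linarith [Real.exp_pos (-liouvilleMass b c d (a + 2 * π))]
  linarith [Real.exp_lt_one_iff.1 this]

lemma measurableSet_sphere_prod_sphere :
    MeasurableSet (sphere (0 : ℂ) 1 ×ˢ sphere (0 : ℂ) 1) :=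
  isClosed_sphere.measurableSet.prod isClosed_sphere.measurableSet

lemma liouvilleM_compl_sphere_prod_sphere :
    LiouvilleM (sphere (0 : ℂ) 1 ×ˢ sphere (0 : ℂ) 1)ᶜ = 0 := by
  rw [liouvilleM_eq_map, Measure.map_apply (by fun_prop) measurableSet_sphere_prod_sphere.compl,
    preimage_compl, preimage_prod_map_prod,
    preimage_eq_univ_iff.2 (range_subset_iff.2 cis_mem_sphere), univ_prod_univ, compl_univ, measure_empty]

section CircleMap

variable {h : ℂ → ℂ} (hinj : InjOn h (sphere 0 1)) (hc : ContinuousOn h (sphere 0 1))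
include hinj hc

lemma map_prodMap_liouvilleM_image_prod_image {A B : Set ℂ} (hA : A ⊆ sphere 0 1)
    (hB : B ⊆ sphere 0 1) (hm : MeasurableSet ((h '' A) ×ˢ (h '' B))) :
    Measure.map (Prod.map h h) LiouvilleM ((h '' A) ×ˢ (h '' B)) = LiouvilleM (A ×ˢ B) := by
  have hae : AEMeasurable (Prod.map h h) LiouvilleM := by
    rw [← Measure.restrict_eq_self_of_ae_mem (mem_ae_iff.2 liouvilleM_compl_sphere_prod_sphere)]
    exact (hc.prodMap hc).aemeasurable measurableSet_sphere_prod_sphere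
  rw [Measure.map_apply_of_aemeasurable hae hm,
    ← measure_inter_conull liouvilleM_compl_sphere_prod_sphere, preimage_prod_map_prod,
    prod_inter_prod, hinj.preimage_image_inter hA, hinj.preimage_image_inter hB]

variable (hm : MapsTo h (sphere 0 1) (sphere 0 1))
include hm

/-- Through `argFrom c`, `h` lifts to a continuous injective, hence strictly monotone, map of
`[a, b]` into `(c, c + 2π)`. -/
lemma image_arc_of_apply_cis_eq {c a b a' b' : ℝ} (hfix : h (cis c) = cis c)
    (ha : c < a) (hab : a < b) (hb : b < c + 2 * π) (ha' : c < a') (hab' : a' ≤ b')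
    (hb' : b' < c + 2 * π) (hha : h (cis a) = cis a') (hhb : h (cis b) = cis b') :
    h '' arc a b = arc a' b' := by
  set g : ℝ → ℝ := fun t => argFrom c (h (cis t))
  have hIcc : Icc a b ⊆ Ioo c (c + 2 * π) := Icc_subset_Ioo ha hb
  have cis_g (t : ℝ) : cis (g t) = h (cis t) := cis_argFrom c (hm (cis_mem_sphere t))
  have g_cis {t : ℝ} (ht : t ∈ Ioo c (c + 2 * π)) (s : ℝ) (hs : h (cis s) = cis t) :
      g s = t := by
    simp only [g, hs, argFrom_cis ht]
  have hne : ∀ t ∈ Icc a b, h (cis t) ≠ cis c := fun t ht heq => by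
    have := congrArg (argFrom c)
      (hinj (cis_mem_sphere t) (cis_mem_sphere c) (heq.trans hfix.symm))
    rw [argFrom_cis (hIcc ht), argFrom_cis_self] at this
    exact (hIcc ht).2.ne this
  have hcont : ContinuousOn g (Icc a b) :=
    (continuousOn_argFrom c).comp
      (hc.comp continuous_cis.continuousOn fun t _ => cis_mem_sphere t)
      fun t ht => ⟨hm (cis_mem_sphere t), hne t ht⟩
  have hginj : InjOn g (Icc a b) := fun s hs t ht hst => by
    have := hinj (cis_mem_sphere s) (cis_mem_sphere t) (by rw [← cis_g, ← cis_g, hst])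
    rw [← argFrom_cis (hIcc hs), ← argFrom_cis (hIcc ht), this]
  have hga : g a = a' := g_cis ⟨ha', hab'.trans_lt hb'⟩ a hha
  have hgb : g b = b' := g_cis ⟨ha'.trans_le hab', hb'⟩ b hhb
  have hmono : MonotoneOn g (Icc a b) :=
    (hcont.strictMonoOn_of_injOn_Icc hab.le (by rw [hga, hgb]; exact hab') hginj).monotoneOn
  unfold arc
  rw [image_image, ← hga, ← hgb, ← hcont.image_Icc_of_monotoneOn hab.le hmono, image_image]
  simp only [cis_g]

lemma exists_image_arc_eq_arcs (hfix : h 1 = 1 ∧ h Complex.I = Complex.I ∧ h (-1) = -1) :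
    ∃ ψ ∈ Ioo π (2 * π), h '' arc 0 (π / 2) = arc 0 (π / 2) ∧
      h '' arc (π / 2) π = arc (π / 2) π ∧ h '' arc π ψ = arc π (3 * π / 2) ∧
      h '' arc ψ (2 * π) = arc (3 * π / 2) (2 * π) := by
  obtain ⟨h1, hI, hneg⟩ := hfix
  have hπ := Real.pi_pos
  have h0 : h (cis 0) = cis 0 := by rw [cis_zero, h1]
  have h2π : h (cis (2 * π)) = cis (2 * π) := by rw [cis_two_pi, h1]
  have hπ2 : h (cis (π / 2)) = cis (π / 2) := by rw [cis_pi_div_two, hI]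
  have hπ' : h (cis π) = cis π := by rw [cis_pi, hneg]
  have hnegπ : h (cis (-π)) = cis (-π) := by rw [cis_neg_pi, hneg]
  obtain ⟨ψ, hψ, hψ'⟩ : cis (3 * π / 2) ∈ h '' arc π (2 * π) := by
    rw [image_arc_of_apply_cis_eq hinj hc hm hπ2 (by linarith) (by linarith) (by linarith)
      (by linarith) (by linarith) (by linarith) hπ' h2π]
    exact mem_image_of_mem cis ⟨by linarith, by linarith⟩
  obtain ⟨ψ, hψI, rfl⟩ := hψ
  have hψπ : ψ ≠ π := by
    rintro rfl
    rw [hπ', cis_pi, cis_three_pi_div_two, neg_inj] at hψ'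
    simpa using congrArg Complex.im hψ'
  have hψ2π : ψ ≠ 2 * π := by
    rintro rfl
    rw [h2π, cis_two_pi, cis_three_pi_div_two] at hψ'
    simpa using congrArg Complex.im hψ'
  have hψ : ψ ∈ Ioo π (2 * π) := ⟨hψI.1.lt_of_ne hψπ.symm, hψI.2.lt_of_ne hψ2π⟩
  refine ⟨ψ, hψ, ?_, ?_, ?_, ?_⟩
  · exact image_arc_of_apply_cis_eq hinj hc hm hnegπ (by linarith) (by linarith) (by linarith)
      (by linarith) (by linarith) (by linarith) h0 hπ2
  · exact image_arc_of_apply_cis_eq hinj hc hm h0 (by linarith) (by linarith) (by linarith)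
      (by linarith) (by linarith) (by linarith) hπ2 hπ'
  · exact image_arc_of_apply_cis_eq hinj hc hm hπ2 (by linarith) hψ.1 (by linarith [hψ.2])
      (by linarith) (by linarith) (by linarith) hπ' hψ'
  · exact image_arc_of_apply_cis_eq hinj hc hm hπ2 (by linarith [hψ.1]) hψ.2 (by linarith)
      (by linarith) (by linarith) (by linarith) hψ' h2π

lemma exists_map_liouvilleM_boxes_eq_ofReal
    (hfix : h 1 = 1 ∧ h Complex.I = Complex.I ∧ h (-1) = -1) :
    ∃ A B : ℝ, 0 < A ∧ 0 < B ∧ Real.exp (-A) + Real.exp (-B) = 1 ∧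
      Measure.map (Prod.map h h) LiouvilleM (arc 0 (π / 2) ×ˢ arc π (3 * π / 2)) =
        ENNReal.ofReal A ∧
      Measure.map (Prod.map h h) LiouvilleM (arc (π / 2) π ×ˢ arc (3 * π / 2) (2 * π)) =
        ENNReal.ofReal B := by
  obtain ⟨ψ, hψ, h₁, h₂, h₃, h₄⟩ := exists_image_arc_eq_arcs hinj hc hm hfix
  have hπ := Real.pi_pos
  have map_arc_prod_arc {a b c d a' b' c' d' : ℝ} (hab : h '' arc a b = arc a' b')
      (hcd : h '' arc c d = arc c' d') :
      Measure.map (Prod.map h h) LiouvilleM (arc a' b' ×ˢ arc c' d') =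
        LiouvilleM (arc a b ×ˢ arc c d) := by
    rw [← hab, ← hcd]
    refine map_prodMap_liouvilleM_image_prod_image hinj hc (arc_subset_sphere a b)
      (arc_subset_sphere c d) ?_
    rw [hab, hcd]
    exact (measurableSet_arc _ _).prod (measurableSet_arc _ _)
  refine ⟨liouvilleMass 0 (π / 2) π ψ, liouvilleMass (π / 2) π ψ (2 * π),
    liouvilleMass_pos (by linarith) (by linarith) hψ.1 (by linarith [hψ.2]),
    liouvilleMass_pos (by linarith) hψ.1 hψ.2 (by linarith), ?_, ?_, ?_⟩
  · simpa using exp_neg_liouvilleMass_add_exp_neg_liouvilleMass (a := 0) (by linarith)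
      (by linarith) hψ.1 (by linarith [hψ.2])
  · rw [map_arc_prod_arc h₁ h₃]
    exact liouvilleM_arc_prod_arc le_rfl (by linarith) (by linarith) hψ.1.le hψ.2.le
      (by linarith [hψ.2])
  · rw [map_arc_prod_arc h₂ h₄]
    exact liouvilleM_arc_prod_arc (by linarith) (by linarith) hψ.1 hψ.2.le le_rfl (by linarith)

end CircleMap

lemma mul_toReal_eq_of_ofReal_mul_eq {t A : ℝ} {m : ENNReal} (ht : 0 ≤ t) (hA : 0 ≤ A)
    (h : ENNReal.ofReal t * m = ENNReal.ofReal A) : t * m.toReal = A := by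
  simpa [ENNReal.toReal_mul, ht, hA] using congrArg ENNReal.toReal h

lemma strictAnti_exp_neg_mul_add_exp_neg_mul {q r : ℝ} (hq : 0 < q) (hr : 0 < r) :
    StrictAnti fun t => Real.exp (-(t * q)) + Real.exp (-(t * r)) := by
  have term {p : ℝ} (hp : 0 < p) : StrictAnti fun t => Real.exp (-(t * p)) :=
    Real.exp_strictMono.comp_strictAnti fun s t hst => by nlinarith
  exact (term hq).add (term hr)

end LiouvilleMap

end

open LiouvilleMap

theorem ray_meets_liouville_image_at_most_once_general
    (Ψ : Measure (ℂ × ℂ)) (t₁ t₂ : ℝ) (h₁ h₂ : ℂ → ℂ)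
    (ht₁ : 0 < t₁) (ht₂ : 0 < t₂) (hq₁ : QS h₁) (hq₂ : QS h₂)
    (hfix₁ : h₁ 1 = 1 ∧ h₁ Complex.I = Complex.I ∧ h₁ (-1) = -1)
    (hfix₂ : h₂ 1 = 1 ∧ h₂ Complex.I = Complex.I ∧ h₂ (-1) = -1)
    (he₁ : Measure.map (Prod.map h₁ h₁) LiouvilleM = (ENNReal.ofReal t₁) • Ψ)
    (he₂ : Measure.map (Prod.map h₂ h₂) LiouvilleM = (ENNReal.ofReal t₂) • Ψ) :
    t₁ = t₂ := by
  obtain ⟨A₁, B₁, hA₁, hB₁, hsum₁, hX₁, hY₁⟩ :=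
    exists_map_liouvilleM_boxes_eq_ofReal hq₁.1.injOn hq₁.2.1 hq₁.1.mapsTo hfix₁
  obtain ⟨A₂, B₂, hA₂, hB₂, hsum₂, hX₂, hY₂⟩ :=
    exists_map_liouvilleM_boxes_eq_ofReal hq₂.1.injOn hq₂.2.1 hq₂.1.mapsTo hfix₂
  rw [he₁, Measure.smul_apply, smul_eq_mul] at hX₁ hY₁
  rw [he₂, Measure.smul_apply, smul_eq_mul] at hX₂ hY₂
  have eX₁ := mul_toReal_eq_of_ofReal_mul_eq ht₁.le hA₁.le hX₁
  have eY₁ := mul_toReal_eq_of_ofReal_mul_eq ht₁.le hB₁.le hY₁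
  have eX₂ := mul_toReal_eq_of_ofReal_mul_eq ht₂.le hA₂.le hX₂
  have eY₂ := mul_toReal_eq_of_ofReal_mul_eq ht₂.le hB₂.le hY₂
  refine (strictAnti_exp_neg_mul_add_exp_neg_mul (pos_of_mul_pos_right (eX₁ ▸ hA₁) ht₁.le)
    (pos_of_mul_pos_right (eY₁ ▸ hB₁) ht₁.le)).injective ?_
  simp only [eX₁, eY₁, eX₂, eY₂, hsum₁, hsum₂]

/-- **Rays meet the image of the Liouville map at most once.**
Every positive ray `{t • Ψ : t > 0}` through the origin in the space of Hölder
distributions intersects the image `L(T(D))` of the universal Teichmüller space (the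
quasisymmetric circle homeomorphisms fixing `1, i, -1`) under the Liouville map
`h ↦ h_*(L)` in at most one point. -/
theorem ray_meets_liouville_image_at_most_once
    (Ψ : Measure (ℂ × ℂ)) (hΨ : Ψ ≠ 0) (t₁ t₂ : ℝ) (h₁ h₂ : ℂ → ℂ)
    (ht₁ : 0 < t₁) (ht₂ : 0 < t₂) (hq₁ : QS h₁) (hq₂ : QS h₂)
    (hfix₁ : h₁ 1 = 1 ∧ h₁ Complex.I = Complex.I ∧ h₁ (-1) = -1)
    (hfix₂ : h₂ 1 = 1 ∧ h₂ Complex.I = Complex.I ∧ h₂ (-1) = -1)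
    (he₁ : Measure.map (Prod.map h₁ h₁) LiouvilleM = (ENNReal.ofReal t₁) • Ψ)
    (he₂ : Measure.map (Prod.map h₂ h₂) LiouvilleM = (ENNReal.ofReal t₂) • Ψ) :
    t₁ = t₂ :=
  ray_meets_liouville_image_at_most_once_general Ψ t₁ t₂ h₁ h₂ ht₁ ht₂ hq₁ hq₂ hfix₁ hfix₂ he₁ he₂
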